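/- arXiv:1510.08633 — 2 statements merged into one kernel-verified Lean document; each statement's English description precedes it below -/
import Mathlib

section
/- Let Φ be a nonzero Bernstein function with lim_{s→0+} Φ(s) = 0 and lim_{s→∞} Φ(s)/s = 0. Then for every integer k ≥ 1: (i) lim_{s→∞} Φ^{(k)}(s) = 0; (ii) lim_{s→0+} s^k Φ^{(k)}(s) = 0; and (iii) if additionally lim_{s→∞} Φ(s) < ∞, then lim_{s→∞} s^k Φ^{(k)}(s) = 0. -/
open Filter Set Topology

/-- A Bernstein function: infinitely differentiable on `(0,∞)`, nonnegative there,
with `(-1)^(k-1) Φ^(k)(s) ≥ 0` for all `k ≥ 1` and `s > 0`. -/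
def IsBernstein (Φ : ℝ → ℝ) : Prop :=
  ContDiffOn ℝ (⊤ : ℕ∞) Φ (Set.Ioi (0:ℝ)) ∧
  (∀ s : ℝ, 0 < s → 0 ≤ Φ s) ∧
  ∀ k : ℕ, 1 ≤ k → ∀ s : ℝ, 0 < s → 0 ≤ (-1 : ℝ) ^ (k - 1) * (deriv^[k] Φ) s

namespace Stmt16Aux

variable {Φ : ℝ → ℝ}

/-- signed derivative `G k = (-1)^k Φ^{(k+1)}`, nonneg and antitone for Bernstein Φ. -/
noncomputable def G (Φ : ℝ → ℝ) (k : ℕ) (s : ℝ) : ℝ := (-1:ℝ)^k * deriv^[k+1] Φ s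

lemma smooth_iter (hB : IsBernstein Φ) (k : ℕ) :
    ContDiffOn ℝ (⊤ : ℕ∞) (deriv^[k] Φ) (Set.Ioi 0) := by
  induction k with
  | zero => exact hB.1
  | succ n ih =>
    rw [Function.iterate_succ_apply']
    exact ih.deriv_of_isOpen isOpen_Ioi (by simp)

lemma diff_iter (hB : IsBernstein Φ) (k : ℕ) {x : ℝ} (hx : 0 < x) :
    DifferentiableAt ℝ (deriv^[k] Φ) x :=
  ((smooth_iter hB k).contDiffAt (isOpen_Ioi.mem_nhds hx)).differentiableAt (by simp)

lemma hasDerivAt_iter (hB : IsBernstein Φ) (k : ℕ) {x : ℝ} (hx : 0 < x) :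
    HasDerivAt (deriv^[k] Φ) (deriv^[k+1] Φ x) x := by
  rw [Function.iterate_succ_apply']
  exact (diff_iter hB k hx).hasDerivAt

lemma G_nonneg (hB : IsBernstein Φ) (k : ℕ) {s : ℝ} (hs : 0 < s) :
    0 ≤ G Φ k s := by
  have h := hB.2.2 (k+1) (by omega) s hs
  simpa [G] using h

lemma antitoneOn_G (hB : IsBernstein Φ) (k : ℕ) :
    AntitoneOn (G Φ k) (Set.Ioi 0) := by
  unfold G
  apply antitoneOn_of_deriv_nonpos (convex_Ioi 0)
  · exact continuousOn_const.mul ((smooth_iter hB (k+1)).continuousOn)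
  · intro x hx
    rw [interior_Ioi] at hx
    exact ((diff_iter hB (k+1) hx).const_mul _).differentiableWithinAt
  · intro x hx
    rw [interior_Ioi] at hx
    have hd : deriv (fun s => (-1:ℝ)^k * deriv^[k+1] Φ s) x = (-1:ℝ)^k * deriv^[k+2] Φ x := by
      have h1 := deriv_const_mul ((-1:ℝ)^k) (diff_iter hB (k+1) hx)
      rw [show (k+2) = (k+1)+1 from rfl, Function.iterate_succ_apply' deriv (k+1)]
      exact h1
    rw [hd]
    have h := hB.2.2 (k+2) (by omega) x hx
    have he : ((k:ℕ)+2-1) = k+1 := by omega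
    rw [he, pow_succ] at h
    nlinarith

lemma key (hB : IsBernstein Φ) (j : ℕ) {a b : ℝ} (ha : 0 < a) (hab : a < b) :
    (b - a) * G Φ j b ≤ (-1:ℝ)^j * (deriv^[j] Φ b - deriv^[j] Φ a) := by
  have hb : 0 < b := ha.trans hab
  have hIcc : Set.Icc a b ⊆ Set.Ioi 0 := fun x hx => lt_of_lt_of_le ha hx.1
  obtain ⟨c, hc, hceq⟩ := exists_hasDerivAt_eq_slope (deriv^[j] Φ) (deriv^[j+1] Φ) hab
    ((smooth_iter hB j).continuousOn.mono hIcc)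
    (fun x hx => hasDerivAt_iter hB j (lt_of_lt_of_le ha hx.1.le))
  have hcb : G Φ j b ≤ G Φ j c :=
    antitoneOn_G hB j (mem_Ioi.2 (ha.trans hc.1)) (mem_Ioi.2 hb) hc.2.le
  have h1 : (-1:ℝ)^j * (deriv^[j] Φ b - deriv^[j] Φ a) = (b - a) * G Φ j c := by
    have hba : b - a ≠ 0 := sub_ne_zero.mpr hab.ne'
    rw [G, hceq]
    field_simp
  rw [h1]
  have hba : (0:ℝ) ≤ b - a := by linarith
  exact mul_le_mul_of_nonneg_left hcb hba

/-- base inequality: `(s/2) * G 0 s ≤ Φ s - Φ (s/2)`. -/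
lemma base_ineq (hB : IsBernstein Φ) {s : ℝ} (hs : 0 < s) :
    (s/2) * G Φ 0 s ≤ Φ s - Φ (s/2) := by
  have h := key hB 0 (a := s/2) (b := s) (by positivity) (by linarith)
  rw [show s - s/2 = s/2 by ring] at h
  simpa using h

/-- step inequality: `(s/2) * G (m+1) s ≤ G m (s/2) - G m s`. -/
lemma step_ineq (hB : IsBernstein Φ) (m : ℕ) {s : ℝ} (hs : 0 < s) :
    (s/2) * G Φ (m+1) s ≤ G Φ m (s/2) - G Φ m s := by
  have h := key hB (m+1) (a := s/2) (b := s) (by positivity) (by linarith)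
  rw [show s - s/2 = s/2 by ring] at h
  have he : (-1:ℝ)^(m+1) * (deriv^[m+1] Φ s - deriv^[m+1] Φ (s/2))
      = G Φ m (s/2) - G Φ m s := by
    simp [G, pow_succ]; ring
  rw [he] at h
  simpa using h

lemma half_atTop : Tendsto (fun s : ℝ => s/2) atTop atTop :=
  tendsto_id.atTop_div_const two_pos

lemma half_zeroRight : Tendsto (fun s : ℝ => s/2) (nhdsWithin 0 (Set.Ioi 0))
    (nhdsWithin 0 (Set.Ioi 0)) := by
  apply tendsto_nhdsWithin_of_tendsto_nhds_of_eventually_within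
  · have : Tendsto (fun s : ℝ => s/2) (nhds 0) (nhds (0/2)) :=
      (continuous_id.div_const 2).tendsto 0
    simpa using this.mono_left nhdsWithin_le_nhds
  · filter_upwards [self_mem_nhdsWithin] with s hs
    exact div_pos (show (0:ℝ) < s from hs) two_pos

/-- (i) : `G m → 0` at `atTop`. -/
lemma S1 (hB : IsBernstein Φ) (hsub : Tendsto (fun s => Φ s / s) atTop (nhds 0)) :
    ∀ m, Tendsto (G Φ m) atTop (nhds 0) := by
  intro m
  induction m with
  | zero =>
    apply squeeze_zero' (g := fun s => 2 * (Φ s / s))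
    · filter_upwards [eventually_gt_atTop (0:ℝ)] with s hs
      exact G_nonneg hB 0 hs
    · filter_upwards [eventually_gt_atTop (0:ℝ)] with s hs
      have h1 := base_ineq hB hs
      have h2 : 0 ≤ Φ (s/2) := hB.2.1 _ (by positivity)
      have h3 : (s/2) * G Φ 0 s ≤ Φ s := by linarith
      have hs' : (0:ℝ) < s/2 := by positivity
      rw [show 2 * (Φ s / s) = Φ s / (s/2) by field_simp, le_div_iff₀ hs']
      linarith
    · simpa using hsub.const_mul 2
  | succ n ih =>
    apply squeeze_zero' (g := fun s => G Φ n (s/2))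
    · filter_upwards [eventually_gt_atTop (0:ℝ)] with s hs
      exact G_nonneg hB (n+1) hs
    · filter_upwards [eventually_ge_atTop (2:ℝ)] with s hs
      have hs0 : (0:ℝ) < s := by linarith
      have h1 := step_ineq hB n hs0
      have h2 : 0 ≤ G Φ n s := G_nonneg hB n hs0
      have h3 : (1:ℝ) ≤ s/2 := by linarith
      nlinarith [G_nonneg hB (n+1) hs0]
    · exact ih.comp half_atTop

/-- common step bound used for (ii) and (iii). -/
lemma step_bound (hB : IsBernstein Φ) (m : ℕ) {s : ℝ} (hs : 0 < s) :
    s^(m+2) * G Φ (m+1) s ≤ 2^(m+2) * ((s/2)^(m+1) * G Φ m (s/2)) := by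
  have h1 := step_ineq hB m hs
  have h2 : 0 ≤ G Φ m s := G_nonneg hB m hs
  have h3 : s * G Φ (m+1) s ≤ 2 * G Φ m (s/2) := by linarith
  have h4 : 0 ≤ s^(m+1) := by positivity
  have h5 : s^(m+1) * (s * G Φ (m+1) s) ≤ s^(m+1) * (2 * G Φ m (s/2)) :=
    mul_le_mul_of_nonneg_left h3 h4
  have h6 : s^(m+1) = 2^(m+1) * (s/2)^(m+1) := by
    rw [div_pow]; field_simp
  calc s^(m+2) * G Φ (m+1) s = s^(m+1) * (s * G Φ (m+1) s) := by ring
    _ ≤ s^(m+1) * (2 * G Φ m (s/2)) := h5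
    _ = 2^(m+2) * ((s/2)^(m+1) * G Φ m (s/2)) := by rw [h6]; ring

/-- (ii) : `s^(m+1) * G m s → 0` at `0+`. -/
lemma S2 (hB : IsBernstein Φ) (h0 : Tendsto Φ (nhdsWithin 0 (Set.Ioi 0)) (nhds 0)) :
    ∀ m, Tendsto (fun s => s^(m+1) * G Φ m s) (nhdsWithin 0 (Set.Ioi 0)) (nhds 0) := by
  intro m
  induction m with
  | zero =>
    apply squeeze_zero' (g := fun s => 2 * Φ s)
    · filter_upwards [self_mem_nhdsWithin] with s hs
      have hs' : (0:ℝ) < s := hs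
      have := G_nonneg hB 0 hs'
      positivity
    · filter_upwards [self_mem_nhdsWithin] with s hs
      have hs : (0:ℝ) < s := hs
      have h1 := base_ineq hB hs
      have h2 : 0 ≤ Φ (s/2) := hB.2.1 _ (by positivity)
      have : s^(0+1) * G Φ 0 s = 2 * ((s/2) * G Φ 0 s) := by ring
      rw [this]; linarith
    · simpa using h0.const_mul 2
  | succ n ih =>
    apply squeeze_zero' (g := fun s => 2^(n+2) * ((s/2)^(n+1) * G Φ n (s/2)))
    · filter_upwards [self_mem_nhdsWithin] with s hs
      have hs' : (0:ℝ) < s := hs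
      have := G_nonneg hB (n+1) hs'
      positivity
    · filter_upwards [self_mem_nhdsWithin] with s hs
      exact step_bound hB n hs
    · have := (ih.comp half_zeroRight).const_mul ((2:ℝ)^(n+2))
      simpa using this

/-- (iii) : `s^(m+1) * G m s → 0` at `atTop` when `Φ` converges. -/
lemma S3 (hB : IsBernstein Φ) {M : ℝ} (hM : Tendsto Φ atTop (nhds M)) :
    ∀ m, Tendsto (fun s => s^(m+1) * G Φ m s) atTop (nhds 0) := by
  intro m
  induction m with
  | zero =>
    apply squeeze_zero' (g := fun s => 2 * (Φ s - Φ (s/2)))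
    · filter_upwards [eventually_gt_atTop (0:ℝ)] with s hs
      have := G_nonneg hB 0 hs
      positivity
    · filter_upwards [eventually_gt_atTop (0:ℝ)] with s hs
      have h1 := base_ineq hB hs
      have : s^(0+1) * G Φ 0 s = 2 * ((s/2) * G Φ 0 s) := by ring
      rw [this]; linarith
    · have := (hM.sub (hM.comp half_atTop)).const_mul (2:ℝ)
      simpa using this
  | succ n ih =>
    apply squeeze_zero' (g := fun s => 2^(n+2) * ((s/2)^(n+1) * G Φ n (s/2)))
    · filter_upwards [eventually_gt_atTop (0:ℝ)] with s hs
      have := G_nonneg hB (n+1) hs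
      positivity
    · filter_upwards [eventually_gt_atTop (0:ℝ)] with s hs
      exact step_bound hB n hs
    · have := (ih.comp half_atTop).const_mul ((2:ℝ)^(n+2))
      simpa using this

end Stmt16Aux

/-- for a nonzero Bernstein function `Φ` with `Φ(0+) = 0` and
`lim_{s→∞} Φ(s)/s = 0`, for every `k ≥ 1`: (i) `Φ^(k)(s) → 0` as `s → ∞`;
(ii) `s^k Φ^(k)(s) → 0` as `s → 0+`; (iii) if moreover `lim_{s→∞} Φ(s)` is finite then
`s^k Φ^(k)(s) → 0` as `s → ∞`. -/
theorem stmt_16 (Φ : ℝ → ℝ)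
    (hB : IsBernstein Φ)
    (hnz : ∃ s : ℝ, 0 < s ∧ 0 < Φ s)
    (h0 : Tendsto Φ (nhdsWithin 0 (Set.Ioi 0)) (nhds 0))
    (hsub : Tendsto (fun s => Φ s / s) atTop (nhds 0)) :
    ∀ k : ℕ, 1 ≤ k →
      Tendsto (deriv^[k] Φ) atTop (nhds 0) ∧
      Tendsto (fun s => s ^ k * (deriv^[k] Φ) s) (nhdsWithin 0 (Set.Ioi 0)) (nhds 0) ∧
      ((∃ M : ℝ, Tendsto Φ atTop (nhds M)) →
        Tendsto (fun s => s ^ k * (deriv^[k] Φ) s) atTop (nhds 0)) := by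
  intro k hk
  obtain ⟨m, rfl⟩ : ∃ m, k = m + 1 := ⟨k - 1, by omega⟩
  have hrep : ∀ s, deriv^[m+1] Φ s = (-1:ℝ)^m * Stmt16Aux.G Φ m s := by
    intro s
    simp [Stmt16Aux.G, ← mul_assoc, ← mul_pow]
  refine ⟨?_, ?_, ?_⟩
  · have := (Stmt16Aux.S1 hB hsub m).const_mul ((-1:ℝ)^m)
    rw [mul_zero] at this
    exact this.congr (fun s => (hrep s).symm)
  · have := (Stmt16Aux.S2 hB h0 m).const_mul ((-1:ℝ)^m)
    rw [mul_zero] at this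
    refine this.congr (fun s => ?_)
    rw [hrep s]; ring
  · rintro ⟨M, hM⟩
    have := (Stmt16Aux.S3 hB hM m).const_mul ((-1:ℝ)^m)
    rw [mul_zero] at this
    refine this.congr (fun s => ?_)
    rw [hrep s]; ring
end

section
/- Let Φ be a nonzero Bernstein function on (0,∞) with lim_{s→0+} Φ(s) = 0 and lim_{s→∞} Φ(s)/s = 0, and suppose that L = lim_{s→∞} s Φ'(s) exists and is finite. Then lim_{s→∞} Φ(s)/log(1+s) = L, and lim_{s→∞} s Φ'(s)/Φ(s) = 0. -/
open Filter Set Topology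

/-- for a nonzero Bernstein function `Φ` with `Φ(0+) = 0` and
`lim_{s→∞} Φ(s)/s = 0`, if `L = lim_{s→∞} sΦ'(s)` exists and is finite, then
`Φ(s)/log(1+s) → L` and `sΦ'(s)/Φ(s) → 0` as `s → ∞`. -/
theorem stmt_18 (Φ : ℝ → ℝ)
    (hB : IsBernstein Φ)
    (hnz : ∃ s : ℝ, 0 < s ∧ 0 < Φ s)
    (h0 : Tendsto Φ (nhdsWithin 0 (Set.Ioi 0)) (nhds 0))
    (hsub : Tendsto (fun s => Φ s / s) atTop (nhds 0))
    (L : ℝ) (hL : Tendsto (fun s => s * deriv Φ s) atTop (nhds L)) :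
    Tendsto (fun s => Φ s / Real.log (1 + s)) atTop (nhds L) ∧
    Tendsto (fun s => s * deriv Φ s / Φ s) atTop (nhds 0) := by
  obtain ⟨hsm, hnn, hsign⟩ := hB
  have hdiff : DifferentiableOn ℝ Φ (Set.Ioi 0) := hsm.differentiableOn (by simp)
  have hd : ∀ s : ℝ, 0 < s → HasDerivAt Φ (deriv Φ s) s := fun s hs =>
    (hdiff.differentiableAt (Ioi_mem_nhds hs)).hasDerivAt
  have hc : ContinuousOn (deriv Φ) (Set.Ioi 0) :=
    hsm.continuousOn_deriv_of_isOpen isOpen_Ioi (by simp)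
  have hpos : ∀ s : ℝ, 0 < s → 0 ≤ deriv Φ s := by
    intro s hs
    have h := hsign 1 le_rfl s hs
    simpa using h
  have hftc : ∀ a b : ℝ, 0 < a → a ≤ b → (∫ t in a..b, deriv Φ t) = Φ b - Φ a := by
    intro a b ha hab
    have hsub' : Set.uIcc a b ⊆ Set.Ioi 0 := by
      rw [Set.uIcc_of_le hab]
      exact fun x hx => lt_of_lt_of_le ha hx.1
    exact intervalIntegral.integral_eq_sub_of_hasDerivAt
      (fun x hx => hd x (hsub' hx)) ((hc.mono hsub').intervalIntegrable)
  have hlog_atTop : Tendsto (fun s : ℝ => Real.log (1 + s)) atTop atTop :=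
    Real.tendsto_log_atTop.comp (tendsto_atTop_add_const_left atTop 1 tendsto_id)
  have hinv : Tendsto (fun s : ℝ => (1 + s)⁻¹) atTop (nhds 0) :=
    tendsto_inv_atTop_zero.comp (tendsto_atTop_add_const_left atTop 1 tendsto_id)
  have hfrac : Tendsto (fun s : ℝ => s / (1 + s)) atTop (nhds 1) := by
    have h1 : Tendsto (fun s : ℝ => 1 - (1 + s)⁻¹) atTop (nhds 1) := by
      simpa using tendsto_const_nhds.sub hinv
    apply Tendsto.congr' _ h1
    filter_upwards [eventually_gt_atTop (0:ℝ)] with s hs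
    have h1s : (1:ℝ) + s ≠ 0 := by positivity
    field_simp
    ring
  have hq : Tendsto (fun s : ℝ => Real.log (s / (1 + s))) atTop (nhds 0) := by
    have := (Real.continuousAt_log (by norm_num : (1:ℝ) ≠ 0)).tendsto.comp hfrac
    simpa [Function.comp_def] using this
  have h₁ : Tendsto (fun s : ℝ => Real.log s / Real.log (1 + s)) atTop (nhds 1) := by
    have h2 : Tendsto (fun s : ℝ => 1 + Real.log (s / (1 + s)) / Real.log (1 + s))
        atTop (nhds 1) := by
      simpa using tendsto_const_nhds.add (hq.div_atTop hlog_atTop)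
    apply Tendsto.congr' _ h2
    filter_upwards [eventually_ge_atTop (1:ℝ)] with s hs
    have hs0 : (0:ℝ) < s := by linarith
    have h1s : (0:ℝ) < 1 + s := by linarith
    have hls : 0 < Real.log (1 + s) := Real.log_pos (by linarith)
    have hsplit : Real.log s = Real.log (1 + s) + Real.log (s / (1 + s)) := by
      rw [Real.log_div (ne_of_gt hs0) (ne_of_gt h1s)]
      ring
    rw [hsplit]
    field_simp
  have hL0 : 0 ≤ L := by
    apply ge_of_tendsto hL
    filter_upwards [eventually_ge_atTop (1:ℝ)] with s hs
    exact mul_nonneg (by linarith) (hpos s (by linarith))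
  -- Part 1
  have part1 : Tendsto (fun s => Φ s / Real.log (1 + s)) atTop (nhds L) := by
    rw [Metric.tendsto_nhds]
    intro ε hε
    set δ := ε / 3 with hδdef
    have hδ : 0 < δ := by positivity
    have hev : ∀ᶠ t in atTop, |t * deriv Φ t - L| < δ := by
      have := Metric.tendsto_nhds.mp hL δ hδ
      simpa [Real.dist_eq] using this
    obtain ⟨A₀, hA₀⟩ := eventually_atTop.mp hev
    set A := max A₀ 2 with hAdef
    have hA2 : (2:ℝ) ≤ A := le_max_right _ _
    have hA0 : (0:ℝ) < A := by linarith
    have hA1 : (1:ℝ) ≤ A := by linarith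
    have hbd : ∀ t : ℝ, A ≤ t → |t * deriv Φ t - L| < δ :=
      fun t ht => hA₀ t (le_trans (le_max_left _ _) ht)
    have hub' : ∀ t : ℝ, A ≤ t → deriv Φ t ≤ (L + δ) / t := by
      intro t ht
      have ht0 : 0 < t := lt_of_lt_of_le hA0 ht
      rw [le_div_iff₀ ht0]
      have h := abs_lt.mp (hbd t ht)
      nlinarith [h.2]
    have hlb' : ∀ t : ℝ, A ≤ t → (L - δ) / t ≤ deriv Φ t := by
      intro t ht
      have ht0 : 0 < t := lt_of_lt_of_le hA0 ht
      rw [div_le_iff₀ ht0]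
      have h := abs_lt.mp (hbd t ht)
      nlinarith [h.1]
    have hcint : ∀ c : ℝ, ∀ s, A ≤ s → (∫ t in A..s, c / t) = c * Real.log (s / A) := by
      intro c s hs
      have hs0 : 0 < s := lt_of_lt_of_le hA0 hs
      have : (fun t : ℝ => c / t) = (fun t : ℝ => c * t⁻¹) := by
        funext t; rw [div_eq_mul_inv]
      rw [this, intervalIntegral.integral_const_mul, integral_inv_of_pos hA0 hs0]
    have hcintg : ∀ c : ℝ, ∀ s, A ≤ s →
        IntervalIntegrable (fun t => c / t) MeasureTheory.volume A s := by
      intro c s hs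
      apply ContinuousOn.intervalIntegrable
      apply ContinuousOn.div continuousOn_const continuousOn_id
      intro x hx
      rw [Set.uIcc_of_le hs] at hx
      exact ne_of_gt (lt_of_lt_of_le hA0 hx.1)
    have hdintg : ∀ s, A ≤ s → IntervalIntegrable (deriv Φ) MeasureTheory.volume A s := by
      intro s hs
      apply ContinuousOn.intervalIntegrable
      apply hc.mono
      rw [Set.uIcc_of_le hs]
      exact fun x hx => lt_of_lt_of_le hA0 hx.1
    have hub : ∀ s, A ≤ s → Φ s ≤ Φ A + (L + δ) * Real.log (s / A) := by
      intro s hs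
      have h1 : (∫ t in A..s, deriv Φ t) ≤ ∫ t in A..s, (L + δ) / t := by
        apply intervalIntegral.integral_mono_on hs (hdintg s hs) (hcintg _ s hs)
        intro t ht
        exact hub' t ht.1
      rw [hftc A s hA0 hs, hcint _ s hs] at h1
      linarith
    have hlb : ∀ s, A ≤ s → Φ A + (L - δ) * Real.log (s / A) ≤ Φ s := by
      intro s hs
      have h1 : (∫ t in A..s, (L - δ) / t) ≤ ∫ t in A..s, deriv Φ t := by
        apply intervalIntegral.integral_mono_on hs (hcintg _ s hs) (hdintg s hs)
        intro t ht
        exact hlb' t ht.1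
      rw [hftc A s hA0 hs, hcint _ s hs] at h1
      linarith
    have hr : Tendsto (fun s => Real.log (s / A) / Real.log (1 + s)) atTop (nhds 1) := by
      have h2 : Tendsto (fun s : ℝ => Real.log s / Real.log (1 + s)
          - Real.log A / Real.log (1 + s)) atTop (nhds 1) := by
        simpa using h₁.sub (tendsto_const_nhds.div_atTop hlog_atTop)
      apply Tendsto.congr' _ h2
      filter_upwards [eventually_ge_atTop (1:ℝ)] with s hs
      have hs0 : (0:ℝ) < s := by linarith
      rw [Real.log_div (ne_of_gt hs0) (ne_of_gt hA0), sub_div]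
    have hE2 : ∀ᶠ s in atTop, Φ A / Real.log (1 + s) < δ :=
      (tendsto_const_nhds.div_atTop hlog_atTop).eventually_lt_const hδ
    have hE3 : ∀ᶠ s in atTop,
        |L - δ| * (1 - Real.log (s / A) / Real.log (1 + s)) < δ := by
      have h3 : Tendsto (fun s => |L - δ| * (1 - Real.log (s / A) / Real.log (1 + s)))
          atTop (nhds 0) := by
        have := (tendsto_const_nhds (x := |L - δ|)).mul ((tendsto_const_nhds (x := (1:ℝ))).sub hr)
        simpa using this
      exact h3.eventually_lt_const hδ
    filter_upwards [eventually_ge_atTop A, hE2, hE3] with s hsA h2 h3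
    have hs0 : 0 < s := lt_of_lt_of_le hA0 hsA
    have hls : 0 < Real.log (1 + s) := Real.log_pos (by linarith)
    set r := Real.log (s / A) / Real.log (1 + s) with hrdef
    have hdivpos : (0:ℝ) < s / A := div_pos hs0 hA0
    have hr0 : 0 ≤ r := div_nonneg (Real.log_nonneg ((one_le_div hA0).mpr hsA)) hls.le
    have hr1' : r ≤ 1 := by
      rw [hrdef, div_le_one hls]
      calc Real.log (s / A) ≤ Real.log s :=
            Real.log_le_log hdivpos (div_le_self hs0.le hA1)
        _ ≤ Real.log (1 + s) := Real.log_le_log hs0 (by linarith)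
    have h4 : Φ s / Real.log (1 + s) ≤ Φ A / Real.log (1 + s) + (L + δ) * r := by
      have h5 : Φ s / Real.log (1 + s)
          ≤ (Φ A + (L + δ) * Real.log (s / A)) / Real.log (1 + s) :=
        (div_le_div_iff_of_pos_right hls).mpr (hub s hsA)
      rw [add_div, mul_div_assoc] at h5
      exact h5
    have h6 : (L + δ) * r ≤ L + δ := by nlinarith
    have h7 : Φ A / Real.log (1 + s) + (L - δ) * r ≤ Φ s / Real.log (1 + s) := by
      have h5 : (Φ A + (L - δ) * Real.log (s / A)) / Real.log (1 + s)
          ≤ Φ s / Real.log (1 + s) :=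
        (div_le_div_iff_of_pos_right hls).mpr (hlb s hsA)
      rw [add_div, mul_div_assoc] at h5
      exact h5
    have hΦA : 0 ≤ Φ A / Real.log (1 + s) := div_nonneg (hnn A hA0) hls.le
    have h8 : (L - δ) * (1 - r) ≤ |L - δ| * (1 - r) :=
      mul_le_mul_of_nonneg_right (le_abs_self _) (by linarith)
    have h9 : (L - δ) * r = (L - δ) - (L - δ) * (1 - r) := by ring
    rw [Real.dist_eq, abs_lt]
    constructor
    · nlinarith
    · nlinarith
  refine ⟨part1, ?_⟩
  -- Part 2
  rcases hL0.lt_or_eq with hLpos | hLzero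
  · -- L > 0 : Φ → ∞
    have hΦtop : Tendsto Φ atTop atTop := by
      have h1 : Tendsto (fun s => Φ s / Real.log (1 + s) * Real.log (1 + s)) atTop atTop :=
        Tendsto.pos_mul_atTop hLpos part1 hlog_atTop
      apply Tendsto.congr' _ h1
      filter_upwards [eventually_ge_atTop (1:ℝ)] with s hs
      have hls : 0 < Real.log (1 + s) := Real.log_pos (by linarith)
      field_simp
    have h2 : Tendsto (fun s => (s * deriv Φ s) * (Φ s)⁻¹) atTop (nhds 0) := by
      simpa using hL.mul hΦtop.inv_tendsto_atTop
    apply Tendsto.congr' _ h2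
    filter_upwards with s
    rw [div_eq_mul_inv]
  · -- L = 0
    obtain ⟨s₀, hs₀, hΦs₀⟩ := hnz
    have hmono : ∀ s, s₀ ≤ s → Φ s₀ ≤ Φ s := by
      intro s hs
      have h1 : 0 ≤ ∫ t in s₀..s, deriv Φ t :=
        intervalIntegral.integral_nonneg hs
          (fun u hu => hpos u (lt_of_lt_of_le hs₀ hu.1))
      rw [hftc s₀ s hs₀ hs] at h1
      linarith
    have hupper : Tendsto (fun s => s * deriv Φ s / Φ s₀) atTop (nhds 0) := by
      rw [← hLzero] at hL
      simpa using hL.div_const (Φ s₀)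
    apply tendsto_of_tendsto_of_tendsto_of_le_of_le' tendsto_const_nhds hupper
    · filter_upwards [eventually_ge_atTop (max s₀ 1)] with s hs
      have hss : s₀ ≤ s := le_trans (le_max_left _ _) hs
      have hs1 : (1:ℝ) ≤ s := le_trans (le_max_right _ _) hs
      have hΦs : 0 < Φ s := lt_of_lt_of_le hΦs₀ (hmono s hss)
      exact div_nonneg (mul_nonneg (by linarith) (hpos s (by linarith))) hΦs.le
    · filter_upwards [eventually_ge_atTop (max s₀ 1)] with s hs
      have hss : s₀ ≤ s := le_trans (le_max_left _ _) hs
      have hs1 : (1:ℝ) ≤ s := le_trans (le_max_right _ _) hs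
      have hnum : 0 ≤ s * deriv Φ s := mul_nonneg (by linarith) (hpos s (by linarith))
      exact div_le_div_of_nonneg_left hnum hΦs₀ (hmono s hss) |>.trans_eq rfl
end
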